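/- arXiv:1504.02731 — 2 statements merged into one kernel-verified Lean document; each statement's English description precedes it below -/
import Mathlib

section
/- Let f, g : ℝ → ℝ be even functions with ∫_ℝ |f(x)|(x² ∨ 1) dx < ∞ and ∫_ℝ |g(x)|(x² ∨ 1) dx < ∞, and suppose ∫_ℝ f(x) dx ≠ 0. Let (σ_n) be positive reals with σ_n → ∞ and (h_n) real numbers, and suppose the limit a := lim_{n→∞} σ_n² · E[f(h_n + σ_n Z)] exists and is finite. Then (i) lim_{n→∞} σ_n e^{−(h_n/σ_n)²/2}/√(2π) = a / ∫_ℝ f(x) dx, and (ii) if moreover a ≠ 0, then lim_{n→∞} E[g(h_n + σ_n Z)] / E[f(h_n + σ_n Z)] = (∫_ℝ g(x) dx) / (∫_ℝ f(x) dx). -/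
/-
With the substitution x = h + σ z, σ² E[f(h + σZ)] = σ ∫ f(x) φ(u + x/σ) dx where u = -h/σ and
φ is the Gaussian density. As f is even, φ(u + x/σ) may be replaced by the average of φ(u ± x/σ),
which differs from φ(u) by at most sup|φ''| · (x/σ)². Hence
σ² E[f(h + σZ)] = σ φ(h/σ) ∫ f + O(σ⁻¹ ∫ |f| x²), and both claims follow:
σ φ(h/σ) → a / ∫ f, and σ² E[g(h + σZ)] → (a / ∫ f) ∫ g.
-/

open MeasureTheory Filter

/-- Standard Gaussian density. -/
noncomputable def stdGauss (z : ℝ) : ℝ := Real.exp (-z ^ 2 / 2) / Real.sqrt (2 * Real.pi)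

/-- Gaussian expectation `E[f(h + σ Z)]` for a standard Gaussian `Z`. -/
noncomputable def gexp (f : ℝ → ℝ) (σ h : ℝ) : ℝ := ∫ z, f (h + σ * z) * stdGauss z

open Real Set

theorem MeasureTheory.Integrable.mul_of_abs_le_abs {α : Type*} [MeasurableSpace α] {μ : Measure α}
    {f v w : α → ℝ} (hfw : Integrable (fun x => f x * w x) μ) (hv : Measurable v)
    (hw : Measurable w) (hvw : ∀ x, |v x| ≤ |w x|) : Integrable (fun x => f x * v x) μ := by
  have hbound : ∀ x, ‖v x / w x‖ ≤ 1 := fun x => by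
    rw [Real.norm_eq_abs, abs_div]
    exact div_le_one_of_le₀ (hvw x) (abs_nonneg _)
  refine (hfw.bdd_mul (hv.div hw).aestronglyMeasurable (Eventually.of_forall hbound)).congr
    (Eventually.of_forall fun x => ?_)
  rcases eq_or_ne (w x) 0 with hx | hx
  · have : v x = 0 := abs_nonpos_iff.1 (by simpa [hx] using hvw x)
    simp [hx, this]
  · simp only [Pi.div_apply]
    field_simp

section SecondDifference

variable {K K' K'' : ℝ → ℝ} {C : ℝ}

theorem abs_sub_le_of_hasDerivAt (hK : ∀ x, HasDerivAt K (K' x) x) (hC : ∀ x, |K' x| ≤ C)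
    (x y : ℝ) : |K x - K y| ≤ C * |x - y| :=
  convex_univ.norm_image_sub_le_of_norm_hasDerivWithin_le (fun z _ => (hK z).hasDerivWithinAt)
    (fun z _ => hC z) (mem_univ y) (mem_univ x)

theorem abs_add_add_sub_two_mul_le (hK : ∀ x, HasDerivAt K (K' x) x)
    (hK' : ∀ x, HasDerivAt K' (K'' x) x) (hC : ∀ x, |K'' x| ≤ C) (u δ : ℝ) :
    |K (u + δ) + K (u - δ) - 2 * K u| ≤ 2 * C * δ ^ 2 := by
  have hC0 : 0 ≤ C := (abs_nonneg _).trans (hC 0)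
  have hG : ∀ t, HasDerivAt (fun t => K (u + t) + K (u - t)) (K' (u + t) - K' (u - t)) t :=
    fun t => by
      have hp := (hK (u + t)).comp t ((hasDerivAt_id t).const_add u)
      have hm := (hK (u - t)).comp t ((hasDerivAt_id t).const_sub u)
      simp only [mul_one, mul_neg] at hp hm
      exact hp.add hm
  have hG' : ∀ t ∈ uIcc 0 δ, ‖K' (u + t) - K' (u - t)‖ ≤ 2 * C * |δ| := fun t ht =>
    calc |K' (u + t) - K' (u - t)| ≤ C * |(u + t) - (u - t)| :=
          abs_sub_le_of_hasDerivAt hK' hC _ _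
      _ = 2 * C * |t - 0| := by
          rw [show u + t - (u - t) = 2 * t by ring, abs_mul, sub_zero, abs_two]; ring
      _ ≤ 2 * C * |δ - 0| := by gcongr 2 * C * ?_; exact abs_sub_left_of_mem_uIcc ht
      _ = 2 * C * |δ| := by rw [sub_zero]
  have := (convex_uIcc 0 δ).norm_image_sub_le_of_norm_hasDerivWithin_le
    (fun t _ => (hG t).hasDerivWithinAt) hG' left_mem_uIcc right_mem_uIcc
  simp only [add_zero, sub_zero, Real.norm_eq_abs] at this
  calc |K (u + δ) + K (u - δ) - 2 * K u| = |K (u + δ) + K (u - δ) - (K u + K u)| := by ring_nf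
    _ ≤ 2 * C * |δ| * |δ| := this
    _ = 2 * C * δ ^ 2 := by rw [mul_assoc, ← sq, sq_abs]

theorem abs_integral_mul_comp_sub_le {f : ℝ → ℝ} (hfe : ∀ x, f (-x) = f x) (hf : Integrable f)
    (hf2 : Integrable fun x => f x * x ^ 2) (hK : ∀ x, HasDerivAt K (K' x) x)
    (hK' : ∀ x, HasDerivAt K' (K'' x) x) (hC : ∀ x, |K'' x| ≤ C) {B : ℝ}
    (hB : ∀ x, |K x| ≤ B) (u t : ℝ) :
    |(∫ x, f x * K (u + t * x)) - K u * ∫ x, f x| ≤ C * t ^ 2 * ∫ x, |f x| * x ^ 2 := by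
  have hKc : Continuous K := continuous_iff_continuousAt.2 fun x => (hK x).continuousAt
  have hint : ∀ w : ℝ → ℝ, Continuous w → Integrable fun x => f x * K (w x) := fun w hw =>
    hf.mul_bdd (hKc.comp hw).aestronglyMeasurable (Eventually.of_forall fun x => hB _)
  have hp := hint (fun x => u + t * x) (by fun_prop)
  have hm := hint (fun x => u - t * x) (by fun_prop)
  -- evenness of `f` lets us average `K (u + t * x)` with `K (u - t * x)`, killing the linear term
  have hsymm : ∫ x, f x * K (u + t * x) = ∫ x, f x * K (u - t * x) := by
    rw [← integral_neg_eq_self]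
    simp only [hfe, mul_neg, ← sub_eq_add_neg]
  have hsplit : 2 * ((∫ x, f x * K (u + t * x)) - K u * ∫ x, f x)
      = ∫ x, f x * (K (u + t * x) + K (u - t * x) - 2 * K u) := by
    calc _ = (∫ x, f x * K (u + t * x)) + (∫ x, f x * K (u - t * x))
          - (∫ x, f x) * (2 * K u) := by rw [← hsymm]; ring
      _ = _ := by
        rw [← integral_add hp hm, ← integral_mul_const,
          ← integral_sub (f := fun x => f x * K (u + t * x) + f x * K (u - t * x)) (hp.add hm)
            (hf.mul_const _)]
        congr 1 with x
        ring
  have hf2' : Integrable fun x => |f x| * x ^ 2 := by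
    simpa only [abs_mul, abs_pow, sq_abs] using hf2.abs
  have hle : ∀ x, ‖f x * (K (u + t * x) + K (u - t * x) - 2 * K u)‖
      ≤ 2 * C * t ^ 2 * (|f x| * x ^ 2) := fun x => by
    rw [Real.norm_eq_abs, abs_mul]
    calc |f x| * |K (u + t * x) + K (u - t * x) - 2 * K u| ≤ |f x| * (2 * C * (t * x) ^ 2) := by
          gcongr; exact abs_add_add_sub_two_mul_le hK hK' hC u (t * x)
      _ = _ := by ring
  have := norm_integral_le_of_norm_le (hf2'.const_mul _) (Eventually.of_forall hle)
  rw [← hsplit, integral_const_mul, Real.norm_eq_abs, abs_mul, abs_two] at this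
  linarith

end SecondDifference

theorem MeasureTheory.Integrable.of_mul_sq_max_one {f : ℝ → ℝ}
    (hf : Integrable fun x => f x * (x ^ 2 ⊔ 1)) :
    Integrable f ∧ Integrable fun x => f x * x ^ 2 := by
  have hw : Measurable fun x : ℝ => x ^ 2 ⊔ 1 := by fun_prop
  have habs : ∀ x : ℝ, |x ^ 2 ⊔ 1| = x ^ 2 ⊔ 1 := fun _ =>
    abs_of_pos (lt_max_of_lt_right one_pos)
  have h1 := hf.mul_of_abs_le_abs (v := fun _ => 1) measurable_const hw fun x => by
    rw [abs_one, habs]; exact le_max_right _ _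
  have h2 := hf.mul_of_abs_le_abs (v := fun x => x ^ 2) (by fun_prop) hw fun x => by
    rw [abs_of_nonneg (sq_nonneg x), habs]; exact le_max_left _ _
  exact ⟨by simpa only [mul_one] using h1, h2⟩

theorem two_le_sqrt_two_pi : 2 ≤ √(2 * π) :=
  Real.le_sqrt_of_sq_le (by nlinarith [pi_gt_three])

theorem stdGauss_neg (z : ℝ) : stdGauss (-z) = stdGauss z := by
  simp [stdGauss]

theorem hasDerivAt_stdGauss (z : ℝ) : HasDerivAt stdGauss (-z * stdGauss z) z := by
  have h : HasDerivAt (fun z : ℝ => -z ^ 2 / 2) (-z) z :=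
    ((hasDerivAt_pow 2 z).fun_neg.div_const 2).congr_deriv (by ring)
  exact (h.exp.div_const _).congr_deriv (by rw [stdGauss]; ring)

theorem hasDerivAt_neg_mul_stdGauss (z : ℝ) :
    HasDerivAt (fun z => -z * stdGauss z) ((z ^ 2 - 1) * stdGauss z) z :=
  ((hasDerivAt_neg z).fun_mul (hasDerivAt_stdGauss z)).congr_deriv (by ring)

theorem abs_stdGauss_le_one (z : ℝ) : |stdGauss z| ≤ 1 := by
  have hexp : exp (-z ^ 2 / 2) ≤ 1 := exp_le_one_iff.2 (by nlinarith [sq_nonneg z])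
  have hs := two_le_sqrt_two_pi
  rw [stdGauss, abs_div, abs_of_pos (exp_pos _), abs_of_pos (by linarith),
    div_le_one (by linarith)]
  linarith

theorem abs_sq_sub_one_mul_stdGauss_le_one (z : ℝ) : |(z ^ 2 - 1) * stdGauss z| ≤ 1 := by
  have hexp := add_one_le_exp (z ^ 2 / 2)
  have h2 : |z ^ 2 - 1| * exp (-z ^ 2 / 2) ≤ 2 := by
    rw [neg_div, exp_neg, ← div_eq_mul_inv, div_le_iff₀ (exp_pos _), abs_le]
    constructor <;> nlinarith [sq_nonneg z]
  have hs := two_le_sqrt_two_pi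
  rw [stdGauss, abs_mul, abs_div, abs_of_pos (exp_pos _),
    abs_of_pos (a := √(2 * π)) (by linarith), ← mul_div_assoc, div_le_one (by linarith)]
  linarith

theorem gexp_eq_inv_mul_integral (f : ℝ → ℝ) {σ : ℝ} (hσ : 0 < σ) (h : ℝ) :
    gexp f σ h = σ⁻¹ * ∫ x, f x * stdGauss (-(h / σ) + σ⁻¹ * x) := by
  set G : ℝ → ℝ := fun x => f x * stdGauss (-(h / σ) + σ⁻¹ * x)
  have hG : ∀ z, f (h + σ * z) * stdGauss z = G (h + σ * z) := fun z => by
    simp only [G]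
    congr 2
    field_simp
    ring
  rw [gexp]
  simp_rw [hG]
  rw [Measure.integral_comp_mul_left (fun y => G (h + y)), integral_add_left_eq_self,
    abs_of_pos (inv_pos.2 hσ), smul_eq_mul]

theorem abs_sq_mul_gexp_sub_le {f : ℝ → ℝ} (hfe : ∀ x, f (-x) = f x) (hf : Integrable f)
    (hf2 : Integrable fun x => f x * x ^ 2) {σ : ℝ} (hσ : 0 < σ) (h : ℝ) :
    |σ ^ 2 * gexp f σ h - σ * stdGauss (h / σ) * ∫ x, f x| ≤ σ⁻¹ * ∫ x, |f x| * x ^ 2 := by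
  have hI := abs_integral_mul_comp_sub_le hfe hf hf2 (K' := fun z => -z * stdGauss z)
    hasDerivAt_stdGauss hasDerivAt_neg_mul_stdGauss abs_sq_sub_one_mul_stdGauss_le_one
    abs_stdGauss_le_one (-(h / σ)) σ⁻¹
  rw [stdGauss_neg] at hI
  rw [gexp_eq_inv_mul_integral f hσ]
  calc _ = σ * |(∫ x, f x * stdGauss (-(h / σ) + σ⁻¹ * x)) - stdGauss (h / σ) * ∫ x, f x| := by
        rw [← abs_of_pos hσ, ← abs_mul, abs_of_pos hσ]
        congr 1
        field_simp
    _ ≤ σ * (1 * σ⁻¹ ^ 2 * ∫ x, |f x| * x ^ 2) := by gcongr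
    _ = σ⁻¹ * ∫ x, |f x| * x ^ 2 := by field_simp

theorem tendsto_sq_mul_gexp_sub {f : ℝ → ℝ} (hfe : ∀ x, f (-x) = f x) (hf : Integrable f)
    (hf2 : Integrable fun x => f x * x ^ 2) {ι : Type*} {l : Filter ι} {σ : ι → ℝ}
    (hσpos : ∀ n, 0 < σ n) (hσ : Tendsto σ l atTop) (h : ι → ℝ) :
    Tendsto (fun n => σ n ^ 2 * gexp f (σ n) (h n) - σ n * stdGauss (h n / σ n) * ∫ x, f x)
      l (nhds 0) :=
  squeeze_zero_norm (fun n => abs_sq_mul_gexp_sub_le hfe hf hf2 (hσpos n) (h n))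
    (by simpa using hσ.inv_tendsto_atTop.mul_const (∫ x, |f x| * x ^ 2))

theorem stmt_2 (f g : ℝ → ℝ) (hfe : ∀ x, f (-x) = f x) (hge : ∀ x, g (-x) = g x)
    (hfint : Integrable (fun x => f x * (x ^ 2 ⊔ 1)))
    (hgint : Integrable (fun x => g x * (x ^ 2 ⊔ 1)))
    (hf0 : (∫ x, f x) ≠ 0)
    (σ : ℕ → ℝ) (hσpos : ∀ n, 0 < σ n) (hσ : Tendsto σ atTop atTop)
    (h : ℕ → ℝ) (a : ℝ)
    (ha : Tendsto (fun n => (σ n) ^ 2 * gexp f (σ n) (h n)) atTop (nhds a)) :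
    Tendsto (fun n => σ n * Real.exp (-(h n / σ n) ^ 2 / 2) / Real.sqrt (2 * Real.pi))
        atTop (nhds (a / ∫ x, f x)) ∧
      (a ≠ 0 →
        Tendsto (fun n => gexp g (σ n) (h n) / gexp f (σ n) (h n)) atTop
          (nhds ((∫ x, g x) / ∫ x, f x))) := by
  obtain ⟨hf, hf2⟩ := hfint.of_mul_sq_max_one
  obtain ⟨hg, hg2⟩ := hgint.of_mul_sq_max_one
  have hφ : Tendsto (fun n => σ n * stdGauss (h n / σ n)) atTop (nhds (a / ∫ x, f x)) := by
    have := (ha.sub (tendsto_sq_mul_gexp_sub hfe hf hf2 hσpos hσ h)).div_const (∫ x, f x)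
    rw [sub_zero] at this
    exact this.congr fun n => by field_simp; ring
  refine ⟨hφ.congr fun n => by rw [stdGauss, mul_div_assoc], fun ha0 => ?_⟩
  have hσg : Tendsto (fun n => σ n ^ 2 * gexp g (σ n) (h n)) atTop
      (nhds (a / (∫ x, f x) * ∫ x, g x)) := by
    simpa only [sub_add_cancel, zero_add] using
      (tendsto_sq_mul_gexp_sub hge hg hg2 hσpos hσ h).add (hφ.mul_const (∫ x, g x))
  convert hσg.div ha ha0 using 2 with n
  · exact (mul_div_mul_left _ _ (pow_ne_zero 2 (hσpos n).ne')).symm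
  · field_simp
end

section
/- Let f ∈ L¹(ℝ²) ∩ L²(ℝ²). For each t ∈ [0,∞) let λ₁(t), λ₂(t) > 0, let v₁(t), v₂(t) be an orthonormal basis of ℝ², and let m(t) ∈ ℝ². Let ν > 0 and let w₁, w₂ be a fixed orthonormal basis of ℝ². Assume that as t → ∞: v₁(t) → w₁ and v₂(t) → w₂, λ₁(t) → ν, λ₂(t) → ∞, ⟨m(t), v₁(t)⟩ → 0, and ⟨m(t), v₂(t)⟩²/λ₂(t) → L for some L ≥ 0. Then λ₂(t)^{1/2} · E[ f( m(t) + λ₁(t)^{1/2} Z₁ v₁(t) + λ₂(t)^{1/2} Z₂ v₂(t) ) ] converges, as t → ∞, to (e^{−L/2}/√(2π)) · E[ ⟨f⟩(ν^{1/2} Z) ], where ⟨f⟩(x) = ∫_ℝ f(x w₁ + y w₂) dy is the bracket of f with respect to {w₁, w₂}. -/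
/-
Write the Gaussian vector as `m + u v₁ + y v₂` and change variables by the rotation
`(u, y) ↦ u v₁ + y v₂`: the left-hand side becomes `∫ f(p) φₜ(⟨p,v₁⟩) ψₜ(⟨p,v₂⟩) dp`, where `φₜ`
is the `N(⟨m,v₁⟩, λ₁)` density and `ψₜ(x) = stdGauss((x - ⟨m,v₂⟩)/√λ₂)` is `√λ₂` times the
`N(⟨m,v₂⟩, λ₂)` density. Pointwise, `φₜ(⟨p,v₁⟩)` tends to the `N(0,ν)` density at `⟨p,w₁⟩`, and
`ψₜ(⟨p,v₂⟩) → e^{-L/2}/√(2π)` because `(⟨p,v₂⟩ - ⟨m,v₂⟩)²/λ₂ → L`. Both factors are uniformly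
bounded once `λ₁ > ν/2`, so dominated convergence with dominant `|f|` applies, and the same change
of variables in the frame `w₁, w₂` identifies the limit with the right-hand side.
-/

open MeasureTheory Filter

/-- Euclidean inner product on `ℝ × ℝ`. -/
def dot (p q : ℝ × ℝ) : ℝ := p.1 * q.1 + p.2 * q.2

open Topology

@[fun_prop]
lemma continuous_stdGauss : Continuous stdGauss := by
  unfold stdGauss; fun_prop

lemma stdGauss_nonneg (z : ℝ) : 0 ≤ stdGauss z := by
  unfold stdGauss; positivity

lemma stdGauss_le_one (z : ℝ) : stdGauss z ≤ 1 := by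
  have hexp : Real.exp (-z ^ 2 / 2) ≤ 1 := Real.exp_le_one_iff.mpr (by nlinarith [sq_nonneg z])
  have hsqrt : 1 ≤ Real.sqrt (2 * Real.pi) :=
    Real.one_le_sqrt.mpr (by nlinarith [Real.pi_gt_three])
  exact div_le_one_of_le₀ (hexp.trans hsqrt) (by positivity)

@[fun_prop]
lemma Continuous.dot {α : Type*} [TopologicalSpace α] {u w : α → ℝ × ℝ}
    (hu : Continuous u) (hw : Continuous w) : Continuous fun x => dot (u x) (w x) := by
  unfold _root_.dot; fun_prop

lemma Filter.Tendsto.dot {ι : Type*} {l : Filter ι} {u w : ι → ℝ × ℝ} {a b : ℝ × ℝ}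
    (hu : Tendsto u l (𝓝 a)) (hw : Tendsto w l (𝓝 b)) :
    Tendsto (fun t => dot (u t) (w t)) l (𝓝 (dot a b)) :=
  ((hu.fst_nhds.mul hw.fst_nhds).add (hu.snd_nhds.mul hw.snd_nhds))

-- The `N(a, s²)` density when `s > 0`.
noncomputable def gaussDensity (a s x : ℝ) : ℝ := stdGauss ((x - a) / s) / s

lemma continuous_gaussDensity (a s : ℝ) : Continuous (gaussDensity a s) := by
  unfold gaussDensity; fun_prop

lemma abs_gaussDensity_le {s : ℝ} (hs : 0 < s) (a x : ℝ) : |gaussDensity a s x| ≤ 1 / s := by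
  rw [gaussDensity, abs_div, abs_of_pos hs, abs_of_nonneg (stdGauss_nonneg _)]
  gcongr
  exact stdGauss_le_one _

lemma Filter.Tendsto.gaussDensity {ι : Type*} {l : Filter ι} {a s x : ι → ℝ} {a₀ s₀ x₀ : ℝ}
    (ha : Tendsto a l (𝓝 a₀)) (hs : Tendsto s l (𝓝 s₀)) (hs₀ : s₀ ≠ 0)
    (hx : Tendsto x l (𝓝 x₀)) :
    Tendsto (fun t => _root_.gaussDensity (a t) (s t) (x t)) l
      (𝓝 (_root_.gaussDensity a₀ s₀ x₀)) :=
  ((continuous_stdGauss.tendsto _).comp ((hx.sub ha).div hs hs₀)).div hs hs₀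

lemma integral_comp_affine_mul_stdGauss (g : ℝ → ℝ) (a : ℝ) {s : ℝ} (hs : 0 < s) :
    ∫ z, g (a + s * z) * stdGauss z = ∫ x, g x * gaussDensity a s x := by
  have hpt : ∀ z, g (a + s * z) * stdGauss z
      = s * (g (a + s * z) * gaussDensity a s (a + s * z)) := by
    intro z
    rw [gaussDensity, add_sub_cancel_left, mul_div_cancel_left₀ _ hs.ne']
    field_simp
  simp_rw [hpt]
  rw [integral_const_mul,
    Measure.integral_comp_mul_left (fun x => g (a + x) * gaussDensity a s (a + x)),
    integral_add_left_eq_self (fun x => g x * gaussDensity a s x), abs_of_pos (inv_pos.mpr hs),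
    smul_eq_mul, mul_inv_cancel_left₀ hs.ne']

def IsOrthonormalFrame (v₁ v₂ : ℝ × ℝ) : Prop :=
  dot v₁ v₁ = 1 ∧ dot v₂ v₂ = 1 ∧ dot v₁ v₂ = 0

noncomputable def frameMap (v₁ v₂ : ℝ × ℝ) : (ℝ × ℝ) →ₗ[ℝ] ℝ × ℝ :=
  (LinearMap.fst ℝ ℝ ℝ).smulRight v₁ + (LinearMap.snd ℝ ℝ ℝ).smulRight v₂

@[simp]
lemma frameMap_apply (v₁ v₂ q : ℝ × ℝ) : frameMap v₁ v₂ q = q.1 • v₁ + q.2 • v₂ := rfl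

lemma det_frameMap (v₁ v₂ : ℝ × ℝ) :
    LinearMap.det (frameMap v₁ v₂) = v₁.1 * v₂.2 - v₂.1 * v₁.2 := by
  rw [← LinearMap.det_toMatrix (Module.Basis.finTwoProd ℝ), Matrix.det_fin_two]
  simp [LinearMap.toMatrix_apply]

namespace IsOrthonormalFrame

variable {v₁ v₂ : ℝ × ℝ} {f : ℝ × ℝ → ℝ}

lemma dot_frameMap_left (hv : IsOrthonormalFrame v₁ v₂) (q : ℝ × ℝ) :
    dot (frameMap v₁ v₂ q) v₁ = q.1 := by
  obtain ⟨h₁, -, h₃⟩ := hv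
  simp only [dot, frameMap_apply, Prod.fst_add, Prod.snd_add, Prod.smul_fst, Prod.smul_snd,
    smul_eq_mul] at *
  linear_combination q.1 * h₁ + q.2 * h₃

lemma dot_frameMap_right (hv : IsOrthonormalFrame v₁ v₂) (q : ℝ × ℝ) :
    dot (frameMap v₁ v₂ q) v₂ = q.2 := by
  obtain ⟨-, h₂, h₃⟩ := hv
  simp only [dot, frameMap_apply, Prod.fst_add, Prod.snd_add, Prod.smul_fst, Prod.smul_snd,
    smul_eq_mul] at *
  linear_combination q.2 * h₂ + q.1 * h₃

-- Lagrange's identity `(ad - bc)² = (a² + b²)(c² + d²) - (ac + bd)²`.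
lemma abs_det_frameMap (hv : IsOrthonormalFrame v₁ v₂) : |LinearMap.det (frameMap v₁ v₂)| = 1 := by
  obtain ⟨h₁, h₂, h₃⟩ := hv
  rw [det_frameMap, ← abs_one, ← sq_eq_sq_iff_abs_eq_abs]
  simp only [dot] at *
  linear_combination (v₂.1 ^ 2 + v₂.2 ^ 2) * h₁ + h₂ - (v₁.1 * v₂.1 + v₁.2 * v₂.2) * h₃

lemma det_frameMap_ne_zero (hv : IsOrthonormalFrame v₁ v₂) :
    LinearMap.det (frameMap v₁ v₂) ≠ 0 :=
  fun h => by simpa [h] using hv.abs_det_frameMap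

lemma bijective_frameMap (hv : IsOrthonormalFrame v₁ v₂) : Function.Bijective (frameMap v₁ v₂) :=
  (LinearMap.equivOfDetNeZero _ hv.det_frameMap_ne_zero).bijective

lemma dot_smul_add_dot_smul (hv : IsOrthonormalFrame v₁ v₂) (p : ℝ × ℝ) :
    dot p v₁ • v₁ + dot p v₂ • v₂ = p := by
  obtain ⟨q, rfl⟩ := hv.bijective_frameMap.surjective p
  rw [hv.dot_frameMap_left, hv.dot_frameMap_right, frameMap_apply]

lemma measurableEmbedding_frameMap (hv : IsOrthonormalFrame v₁ v₂) :
    MeasurableEmbedding (frameMap v₁ v₂) :=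
  (LinearMap.isClosedEmbedding_of_injective
    (LinearMap.ker_eq_bot.mpr hv.bijective_frameMap.injective)).measurableEmbedding

lemma measurePreserving_frameMap (hv : IsOrthonormalFrame v₁ v₂) :
    MeasurePreserving (frameMap v₁ v₂) := by
  refine ⟨(frameMap v₁ v₂).continuous_of_finiteDimensional.measurable, ?_⟩
  rw [Measure.map_linearMap_addHaar_eq_smul_addHaar volume hv.det_frameMap_ne_zero, abs_inv,
    hv.abs_det_frameMap, inv_one, ENNReal.ofReal_one, one_smul]

theorem integral_integral_mul_eq_integral (hv : IsOrthonormalFrame v₁ v₂) (hf : Integrable f)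
    {φ ψ : ℝ → ℝ} (hφ : Measurable φ) (hψ : Measurable ψ) {Cφ Cψ : ℝ}
    (hφC : ∀ x, |φ x| ≤ Cφ) (hψC : ∀ y, |ψ y| ≤ Cψ) :
    ∫ u, (∫ y, f (u • v₁ + y • v₂) * ψ y) * φ u = ∫ p, f p * φ (dot p v₁) * ψ (dot p v₂) := by
  have hbound : ∀ q : ℝ × ℝ, ‖φ q.1 * ψ q.2‖ ≤ Cφ * Cψ := fun q => by
    rw [norm_mul]
    exact mul_le_mul (hφC _) (hψC _) (norm_nonneg _) ((abs_nonneg _).trans (hφC 0))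
  have hF : Integrable (fun q : ℝ × ℝ => f (frameMap v₁ v₂ q) * (φ q.1 * ψ q.2))
      (volume.prod volume) :=
    ((hv.measurePreserving_frameMap.integrable_comp_emb hv.measurableEmbedding_frameMap).mpr
      hf).mul_bdd ((hφ.comp measurable_fst).mul (hψ.comp measurable_snd)).aestronglyMeasurable
      (Eventually.of_forall hbound)
  calc ∫ u, (∫ y, f (u • v₁ + y • v₂) * ψ y) * φ u
      = ∫ u, ∫ y, f (frameMap v₁ v₂ (u, y)) * (φ u * ψ y) := by
        congr 1 with u
        rw [← integral_mul_const]
        congr 1 with y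
        simp only [frameMap_apply]
        ring
    _ = ∫ q, f (frameMap v₁ v₂ q) * (φ q.1 * ψ q.2) := by
        rw [Measure.volume_eq_prod, integral_prod _ hF]
    _ = ∫ p, f p * φ (dot p v₁) * ψ (dot p v₂) := by
        rw [← hv.measurePreserving_frameMap.integral_comp hv.measurableEmbedding_frameMap
          (fun p => f p * φ (dot p v₁) * ψ (dot p v₂))]
        simp only [hv.dot_frameMap_left, hv.dot_frameMap_right, mul_assoc]

theorem mul_integral_gaussian_eq (hv : IsOrthonormalFrame v₁ v₂) (hf : Integrable f)
    (m : ℝ × ℝ) {s₁ s₂ : ℝ} (hs₁ : 0 < s₁) (hs₂ : 0 < s₂) :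
    s₂ * ∫ z₁, (∫ z₂, f (m + (s₁ * z₁) • v₁ + (s₂ * z₂) • v₂) * stdGauss z₂) * stdGauss z₁
      = ∫ p, f p * (gaussDensity (dot m v₁) s₁ (dot p v₁) *
          stdGauss ((dot p v₂ - dot m v₂) / s₂)) := by
  set a := dot m v₁
  set b := dot m v₂
  have hm : ∀ z₁ z₂ : ℝ, m + (s₁ * z₁) • v₁ + (s₂ * z₂) • v₂
      = (a + s₁ * z₁) • v₁ + (b + s₂ * z₂) • v₂ := fun z₁ z₂ => by
    conv_lhs => rw [← hv.dot_smul_add_dot_smul m]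
    module
  have hinner : ∀ u : ℝ, ∫ z₂, f (u • v₁ + (b + s₂ * z₂) • v₂) * stdGauss z₂
      = ∫ y, f (u • v₁ + y • v₂) * gaussDensity b s₂ y :=
    fun u => integral_comp_affine_mul_stdGauss (fun y => f (u • v₁ + y • v₂)) b hs₂
  simp_rw [hm, hinner]
  rw [integral_comp_affine_mul_stdGauss (fun u => ∫ y, f (u • v₁ + y • v₂) * gaussDensity b s₂ y)
      a hs₁,
    hv.integral_integral_mul_eq_integral hf (continuous_gaussDensity _ _).measurable
      (continuous_gaussDensity _ _).measurable (abs_gaussDensity_le hs₁ a)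
      (abs_gaussDensity_le hs₂ b),
    ← integral_const_mul]
  congr 1 with p
  unfold gaussDensity
  field_simp

theorem integral_bracket_mul_stdGauss (hv : IsOrthonormalFrame v₁ v₂) (hf : Integrable f)
    {s : ℝ} (hs : 0 < s) :
    ∫ z : ℝ, (∫ y : ℝ, f ((s * z) • v₁ + y • v₂)) * stdGauss z
      = ∫ p, f p * gaussDensity 0 s (dot p v₁) := by
  have h := integral_comp_affine_mul_stdGauss (fun u : ℝ => ∫ y : ℝ, f (u • v₁ + y • v₂)) 0 hs
  simp only [zero_add] at h
  rw [h]
  simpa using hv.integral_integral_mul_eq_integral hf (continuous_gaussDensity 0 s).measurable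
    measurable_const (abs_gaussDensity_le hs 0) (fun _ => le_refl |(1 : ℝ)|)

end IsOrthonormalFrame

theorem tendsto_integral_mul_of_tendsto {α ι : Type*} [MeasurableSpace α] {μ : Measure α}
    {l : Filter ι} [l.IsCountablyGenerated] {f : α → ℝ} (hf : Integrable f μ)
    {g : ι → α → ℝ} {g₀ : α → ℝ} {C : ℝ}
    (hg_meas : ∀ᶠ t in l, AEStronglyMeasurable (g t) μ) (hg_bound : ∀ᶠ t in l, ∀ x, |g t x| ≤ C)
    (hg_lim : ∀ x, Tendsto (fun t => g t x) l (𝓝 (g₀ x))) :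
    Tendsto (fun t => ∫ x, f x * g t x ∂μ) l (𝓝 (∫ x, f x * g₀ x ∂μ)) :=
  tendsto_integral_filter_of_dominated_convergence (fun x => |f x| * C)
    (hg_meas.mono fun _ ht => hf.aestronglyMeasurable.mul ht)
    (hg_bound.mono fun _ ht => Eventually.of_forall fun x => by
      rw [norm_mul, Real.norm_eq_abs, Real.norm_eq_abs]
      exact mul_le_mul_of_nonneg_left (ht x) (abs_nonneg _))
    (hf.abs.mul_const C) (Eventually.of_forall fun x => tendsto_const_nhds.mul (hg_lim x))

theorem tendsto_stdGauss_sub_div_sqrt {ι : Type*} {l : Filter ι} {x b s : ι → ℝ} {x₀ L : ℝ}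
    (hx : Tendsto x l (𝓝 x₀)) (hs : Tendsto s l atTop)
    (hb : Tendsto (fun t => b t ^ 2 / s t) l (𝓝 L)) :
    Tendsto (fun t => stdGauss ((x t - b t) / Real.sqrt (s t))) l
      (𝓝 (Real.exp (-L / 2) / Real.sqrt (2 * Real.pi))) := by
  have hinv : Tendsto (fun t => (s t)⁻¹) l (𝓝 0) := hs.inv_tendsto_atTop
  have hratio : Tendsto (fun t => b t / s t) l (𝓝 0) := by
    have hsq := hb.mul hinv
    rw [mul_zero] at hsq
    have habs := (hsq.congr fun t => by ring : Tendsto (fun t => (b t / s t) ^ 2) l (𝓝 0)).sqrt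
    rw [Real.sqrt_zero] at habs
    exact (tendsto_zero_iff_abs_tendsto_zero _).mpr (habs.congr fun t => Real.sqrt_sq_eq_abs _)
  have hsq : Tendsto (fun t => ((x t - b t) / Real.sqrt (s t)) ^ 2) l (𝓝 L) := by
    have hlim := ((hx.pow 2).mul hinv).sub ((hx.mul hratio).const_mul 2) |>.add hb
    simp only [mul_zero, sub_zero, zero_add] at hlim
    refine hlim.congr' ((hs.eventually_gt_atTop 0).mono fun t ht => ?_)
    dsimp only
    rw [div_pow, Real.sq_sqrt ht.le]
    field_simp
    ring
  exact ((by fun_prop : Continuous fun u : ℝ => Real.exp (-u / 2) / Real.sqrt (2 * Real.pi)).tendsto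
    L).comp hsq

theorem stmt_9_general (f : ℝ × ℝ → ℝ)
    (hf1 : Integrable f (volume : Measure (ℝ × ℝ)))
    (lam1 lam2 : ℝ → ℝ) (v1 v2 : ℝ → ℝ × ℝ) (m : ℝ → ℝ × ℝ)
    (hlam1pos : ∀ t, 0 < lam1 t) (hlam2pos : ∀ t, 0 < lam2 t)
    (horth : ∀ t, dot (v1 t) (v1 t) = 1 ∧ dot (v2 t) (v2 t) = 1 ∧ dot (v1 t) (v2 t) = 0)
    (ν : ℝ) (hν : 0 < ν) (w1 w2 : ℝ × ℝ)
    (hworth : dot w1 w1 = 1 ∧ dot w2 w2 = 1 ∧ dot w1 w2 = 0)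
    (hv1 : Tendsto v1 atTop (nhds w1)) (hv2 : Tendsto v2 atTop (nhds w2))
    (hl1 : Tendsto lam1 atTop (nhds ν)) (hl2 : Tendsto lam2 atTop atTop)
    (hm1 : Tendsto (fun t => dot (m t) (v1 t)) atTop (nhds 0))
    (L : ℝ)
    (hm2 : Tendsto (fun t => dot (m t) (v2 t) ^ 2 / lam2 t) atTop (nhds L)) :
    Tendsto
      (fun t => Real.sqrt (lam2 t) *
        ∫ (z1 : ℝ), (∫ (z2 : ℝ),
            f (m t + (Real.sqrt (lam1 t) * z1) • v1 t + (Real.sqrt (lam2 t) * z2) • v2 t) *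
              stdGauss z2) * stdGauss z1)
      atTop
      (nhds (Real.exp (-L / 2) / Real.sqrt (2 * Real.pi) *
        ∫ (z : ℝ), (∫ (y : ℝ), f ((Real.sqrt ν * z) • w1 + y • w2)) * stdGauss z)) := by
  set C := Real.exp (-L / 2) / Real.sqrt (2 * Real.pi)
  have hsν : 0 < Real.sqrt ν := Real.sqrt_pos.mpr hν
  have hs₁ : ∀ t, 0 < Real.sqrt (lam1 t) := fun t => Real.sqrt_pos.mpr (hlam1pos t)
  have hlimit : C * ∫ z : ℝ, (∫ y : ℝ, f ((Real.sqrt ν * z) • w1 + y • w2)) * stdGauss z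
      = ∫ p, f p * (gaussDensity 0 (Real.sqrt ν) (dot p w1) * C) := by
    rw [IsOrthonormalFrame.integral_bracket_mul_stdGauss hworth hf1 hsν, ← integral_const_mul]
    congr 1 with p
    ring
  rw [hlimit]
  refine Tendsto.congr (fun t => (IsOrthonormalFrame.mul_integral_gaussian_eq (horth t) hf1
    (m t) (hs₁ t) (Real.sqrt_pos.mpr (hlam2pos t))).symm) ?_
  refine tendsto_integral_mul_of_tendsto hf1 (C := 1 / Real.sqrt (ν / 2))
    (Eventually.of_forall fun t => ?_) ?_ fun p => ?_
  · exact Continuous.aestronglyMeasurable (by unfold gaussDensity; fun_prop)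
  · filter_upwards [hl1.eventually (lt_mem_nhds (half_lt_self hν))] with t ht p
    rw [abs_mul, abs_of_nonneg (stdGauss_nonneg _)]
    calc _ ≤ 1 / Real.sqrt (lam1 t) * 1 :=
          mul_le_mul (abs_gaussDensity_le (hs₁ t) _ _) (stdGauss_le_one _) (stdGauss_nonneg _)
            (by positivity)
      _ ≤ 1 / Real.sqrt (ν / 2) := by
          rw [mul_one]
          gcongr
  · exact (hm1.gaussDensity hl1.sqrt hsν.ne' (tendsto_const_nhds.dot hv1)).mul
      (tendsto_stdGauss_sub_div_sqrt (tendsto_const_nhds.dot hv2) hl2 hm2)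

theorem stmt_9 (f : ℝ × ℝ → ℝ)
    (hf1 : Integrable f (volume : Measure (ℝ × ℝ)))
    (hf2 : MemLp f 2 (volume : Measure (ℝ × ℝ)))
    (lam1 lam2 : ℝ → ℝ) (v1 v2 : ℝ → ℝ × ℝ) (m : ℝ → ℝ × ℝ)
    (hlam1pos : ∀ t, 0 < lam1 t) (hlam2pos : ∀ t, 0 < lam2 t)
    (horth : ∀ t, dot (v1 t) (v1 t) = 1 ∧ dot (v2 t) (v2 t) = 1 ∧ dot (v1 t) (v2 t) = 0)
    (ν : ℝ) (hν : 0 < ν) (w1 w2 : ℝ × ℝ)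
    (hworth : dot w1 w1 = 1 ∧ dot w2 w2 = 1 ∧ dot w1 w2 = 0)
    (hv1 : Tendsto v1 atTop (nhds w1)) (hv2 : Tendsto v2 atTop (nhds w2))
    (hl1 : Tendsto lam1 atTop (nhds ν)) (hl2 : Tendsto lam2 atTop atTop)
    (hm1 : Tendsto (fun t => dot (m t) (v1 t)) atTop (nhds 0))
    (L : ℝ) (hL : 0 ≤ L)
    (hm2 : Tendsto (fun t => dot (m t) (v2 t) ^ 2 / lam2 t) atTop (nhds L)) :
    Tendsto
      (fun t => Real.sqrt (lam2 t) *
        ∫ (z1 : ℝ), (∫ (z2 : ℝ),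
            f (m t + (Real.sqrt (lam1 t) * z1) • v1 t + (Real.sqrt (lam2 t) * z2) • v2 t) *
              stdGauss z2) * stdGauss z1)
      atTop
      (nhds (Real.exp (-L / 2) / Real.sqrt (2 * Real.pi) *
        ∫ (z : ℝ), (∫ (y : ℝ), f ((Real.sqrt ν * z) • w1 + y • w2)) * stdGauss z)) :=
  stmt_9_general f hf1 lam1 lam2 v1 v2 m hlam1pos hlam2pos horth ν hν w1 w2 hworth hv1 hv2 hl1 hl2
    hm1 L hm2
end
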